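/- Let M = (E, ρ) be a simple binary matroid with no isthmuses whose minimum distance satisfies d ≥ 3. Then for every atom Z_a of the lattice of cyclic flats Z(M) and every coatom Z^c of Z(M), the cardinality |Z_a − Z^c| is even. -/

import Mathlib

open Finset

structure FinMatroid (α : Type*) [DecidableEq α] where
  E : Finset α
  rk : Finset α → ℕ
  rk_le_card : ∀ A, A ⊆ E → rk A ≤ A.card
  rk_mono : ∀ A B, A ⊆ B → B ⊆ E → rk A ≤ rk B
  rk_submod : ∀ A B, A ⊆ E → B ⊆ E → rk (A ∪ B) + rk (A ∩ B) ≤ rk A + rk B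

namespace FinMatroid

variable {α : Type*} [DecidableEq α]

/-- The closure operator `cl(A) = {e ∈ E : ρ(A ∪ {e}) = ρ(A)}`. -/
def cl (M : FinMatroid α) (A : Finset α) : Finset α :=
  M.E.filter fun e => M.rk (insert e A) = M.rk A

/-- The cyclic operator `cyc(A) = {e ∈ A : ρ(A − {e}) = ρ(A)}`. -/
def cyc (M : FinMatroid α) (A : Finset α) : Finset α :=
  A.filter fun e => M.rk (A.erase e) = M.rk A

/-- A flat is a set fixed by the closure operator. -/
def IsFlat (M : FinMatroid α) (F : Finset α) : Prop :=
  F ⊆ M.E ∧ M.cl F = F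

/-- A cyclic set is a set fixed by the cyclic operator. -/
def IsCyclic (M : FinMatroid α) (U : Finset α) : Prop :=
  U ⊆ M.E ∧ M.cyc U = U

/-- A cyclic flat is a set fixed by both the closure and the cyclic operators. -/
def IsCyclicFlat (M : FinMatroid α) (Z : Finset α) : Prop :=
  Z ⊆ M.E ∧ M.cl Z = Z ∧ M.cyc Z = Z

/-- The minor `M|Y/X`: restriction to `Y` followed by contraction of `X`. -/
def minor (M : FinMatroid α) (X Y : Finset α) (hXY : X ⊆ Y) (hY : Y ⊆ M.E) :
    FinMatroid α where
  E := Y \ X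
  rk A := M.rk (A ∪ X) - M.rk X
  rk_le_card := by
    intro A hA
    have hAE : A ⊆ M.E := fun a ha => hY (mem_sdiff.mp (hA ha)).1
    have hXE : X ⊆ M.E := hXY.trans hY
    have h1 := M.rk_submod A X hAE hXE
    have h2 := M.rk_le_card A hAE
    show M.rk (A ∪ X) - M.rk X ≤ A.card
    omega
  rk_mono := by
    intro A B hAB hB
    have hBE : B ⊆ M.E := fun a ha => hY (mem_sdiff.mp (hB ha)).1
    have hBX : B ∪ X ⊆ M.E := union_subset hBE (hXY.trans hY)
    have := M.rk_mono (A ∪ X) (B ∪ X) (union_subset_union hAB Subset.rfl) hBX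
    show M.rk (A ∪ X) - M.rk X ≤ M.rk (B ∪ X) - M.rk X
    omega
  rk_submod := by
    intro A B hA hB
    have hAE : A ⊆ M.E := fun a ha => hY (mem_sdiff.mp (hA ha)).1
    have hBE : B ⊆ M.E := fun a ha => hY (mem_sdiff.mp (hB ha)).1
    have hXE : X ⊆ M.E := hXY.trans hY
    have hAX : A ∪ X ⊆ M.E := union_subset hAE hXE
    have hBX : B ∪ X ⊆ M.E := union_subset hBE hXE
    have hsub := M.rk_submod (A ∪ X) (B ∪ X) hAX hBX
    have e1 : (A ∪ X) ∪ (B ∪ X) = (A ∪ B) ∪ X := by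
      ext x; simp only [mem_union]; tauto
    have e2 : (A ∪ X) ∩ (B ∪ X) = (A ∩ B) ∪ X := by
      ext x; simp only [mem_union, mem_inter]; tauto
    rw [e1, e2] at hsub
    have h1 : M.rk X ≤ M.rk (A ∪ X) := M.rk_mono X _ subset_union_right hAX
    have h2 : M.rk X ≤ M.rk (B ∪ X) := M.rk_mono X _ subset_union_right hBX
    have hIX : (A ∩ B) ∪ X ⊆ M.E := union_subset (inter_subset_left.trans hAE) hXE
    have hUX : (A ∪ B) ∪ X ⊆ M.E := union_subset (union_subset hAE hBE) hXE
    have h3 : M.rk X ≤ M.rk ((A ∩ B) ∪ X) := M.rk_mono X _ subset_union_right hIX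
    have h4 : M.rk X ≤ M.rk ((A ∪ B) ∪ X) := M.rk_mono X _ subset_union_right hUX
    show M.rk ((A ∪ B) ∪ X) - M.rk X + (M.rk ((A ∩ B) ∪ X) - M.rk X) ≤
      (M.rk (A ∪ X) - M.rk X) + (M.rk (B ∪ X) - M.rk X)
    omega

/-- The restriction `M|Y`. -/
def restrict (M : FinMatroid α) (Y : Finset α) (hY : Y ⊆ M.E) : FinMatroid α where
  E := Y
  rk := M.rk
  rk_le_card := fun A hA => M.rk_le_card A (hA.trans hY)
  rk_mono := fun A B hAB hB => M.rk_mono A B hAB (hB.trans hY)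
  rk_submod := fun A B hA hB => M.rk_submod A B (hA.trans hY) (hB.trans hY)

/-- `M` is binary: it is the matroid of linear dependence of a family of
vectors over the field with two elements. -/
def IsBinary (M : FinMatroid α) : Prop :=
  ∃ (m : ℕ) (φ : α → (Fin m → ZMod 2)),
    ∀ A : Finset α, A ⊆ M.E →
      M.rk A = Module.finrank (ZMod 2) (Submodule.span (ZMod 2) (φ '' (A : Set α)))

def Simple (M : FinMatroid α) : Prop :=
  (∀ e ∈ M.E, M.rk {e} = 1) ∧
    ∀ e ∈ M.E, ∀ f ∈ M.E, e ≠ f → M.rk ({e, f} : Finset α) = 2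

def NoIsthmus (M : FinMatroid α) : Prop :=
  ∀ e ∈ M.E, M.rk (M.E.erase e) = M.rk M.E

def IsMinDist (M : FinMatroid α) (d : ℕ) : Prop :=
  (∃ X ⊆ M.E, M.rk (M.E \ X) < M.rk M.E ∧ X.card = d) ∧
    ∀ X ⊆ M.E, M.rk (M.E \ X) < M.rk M.E → d ≤ X.card

def IsAtomCF (M : FinMatroid α) (Z : Finset α) : Prop :=
  M.IsCyclicFlat Z ∧ Z ≠ ∅ ∧ ¬ ∃ Z', M.IsCyclicFlat Z' ∧ ∅ ⊂ Z' ∧ Z' ⊂ Z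

def IsCoatomCF (M : FinMatroid α) (Z : Finset α) : Prop :=
  M.IsCyclicFlat Z ∧ Z ⊂ M.E ∧ ¬ ∃ Z', M.IsCyclicFlat Z' ∧ Z ⊂ Z' ∧ Z' ⊂ M.E

def IsCircuit (M : FinMatroid α) (C : Finset α) : Prop :=
  C ⊆ M.E ∧ M.rk C < C.card ∧ ∀ D ⊂ C, M.rk D = D.card

end FinMatroid

/-
Over `GF(2)` an atom `Za` of the lattice of cyclic flats is a circuit, so its vectors sum to zero:
below its rank every subset of `Za` is independent, i.e. `M|Za` is uniform, and a binary uniform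
matroid of rank `r ≥ 2` has at most `r + 1` elements (else contracting `r - 2` of them leaves
`U_{2,4}`). Dually `M/Zc` is uniform for a coatom `Zc`; it has no cocircuit of size at most two
because `d ≥ 3`, which the same bound turns into `rk(M/Zc) = 1`. So in `GF(2)^m / ⟨Zc⟩` every
element outside `Zc` is the same nonzero vector `v`, and the circuit sum maps to
`|Za − Zc| • v = 0`.
-/

lemma ZModModule.even_of_nsmul_eq_zero {V : Type*} [AddCommGroup V] [Module (ZMod 2) V]
    {v : V} {k : ℕ} (hv : v ≠ 0) (hk : k • v = 0) : Even k := by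
  rw [← Nat.cast_smul_eq_nsmul (ZMod 2)] at hk
  exact (ZMod.natCast_eq_zero_iff_even).1 ((smul_eq_zero.1 hk).resolve_right hv)

namespace FinMatroid

section
variable {α K V : Type*} [Field K] [AddCommGroup V] [Module K V] {φ : α → V} {A : Finset α} {e : α}

variable (K) in
def repSpan (φ : α → V) (A : Finset α) : Submodule K V :=
  Submodule.span K (φ '' A)

instance : FiniteDimensional K (repSpan K φ A) :=
  FiniteDimensional.span_of_finite K (A.finite_toSet.image φ)

lemma mem_repSpan (he : e ∈ A) : φ e ∈ repSpan K φ A :=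
  Submodule.subset_span (Set.mem_image_of_mem φ he)

end

variable {α : Type*} [DecidableEq α] {M : FinMatroid α} {A B C X Z : Finset α} {e : α}

lemma rk_empty (M : FinMatroid α) : M.rk ∅ = 0 :=
  Nat.le_zero.mp (M.rk_le_card ∅ (empty_subset _))

lemma rk_union_le (hX : X ⊆ M.E) (hB : B ⊆ M.E) : M.rk (X ∪ B) ≤ M.rk X + B.card := by
  have := M.rk_submod X B hX hB
  have := M.rk_le_card B hB
  omega

lemma rk_insert_le (hX : X ⊆ M.E) (he : e ∈ M.E) : M.rk (insert e X) ≤ M.rk X + 1 := by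
  have := rk_union_le (B := {e}) hX (singleton_subset_iff.2 he)
  rwa [union_comm, ← insert_eq, card_singleton] at this

lemma rk_insert_eq_of_subset (hX : X ⊆ M.E) (he : e ∈ M.E) (hAX : A ⊆ X)
    (h : M.rk (insert e A) = M.rk A) : M.rk (insert e X) = M.rk X := by
  have hsub := M.rk_submod (insert e A) X (insert_subset he (hAX.trans hX)) hX
  rw [insert_union, union_eq_right.2 hAX] at hsub
  have h1 : M.rk A ≤ M.rk (insert e A ∩ X) :=
    M.rk_mono _ _ (subset_inter (subset_insert _ _) hAX) (inter_subset_right.trans hX)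
  have h2 : M.rk X ≤ M.rk (insert e X) := M.rk_mono _ _ (subset_insert _ _) (insert_subset he hX)
  omega

lemma mem_cl : e ∈ M.cl A ↔ e ∈ M.E ∧ M.rk (insert e A) = M.rk A := mem_filter

lemma cl_subset_ground : M.cl A ⊆ M.E := filter_subset _ _

lemma subset_cl (hA : A ⊆ M.E) : A ⊆ M.cl A :=
  fun a ha => mem_cl.2 ⟨hA ha, by rw [insert_eq_of_mem ha]⟩

lemma rk_union_eq_of_subset_cl (hA : A ⊆ M.E) (hB : B ⊆ M.cl A) : M.rk (A ∪ B) = M.rk A := by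
  induction B using Finset.induction with
  | empty => simp
  | insert f B _ ih =>
    have hB' : B ⊆ M.cl A := (subset_insert _ _).trans hB
    obtain ⟨hfE, hf⟩ := mem_cl.1 (hB (mem_insert_self f B))
    rw [union_insert, rk_insert_eq_of_subset (union_subset hA (hB'.trans cl_subset_ground)) hfE
      subset_union_left hf, ih hB']

lemma rk_cl (hA : A ⊆ M.E) : M.rk (M.cl A) = M.rk A := by
  simpa [union_eq_right.2 (subset_cl hA)] using rk_union_eq_of_subset_cl hA subset_rfl

lemma cl_cl (hA : A ⊆ M.E) : M.cl (M.cl A) = M.cl A := by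
  refine Subset.antisymm (fun e he => ?_) (subset_cl cl_subset_ground)
  obtain ⟨heE, h⟩ := mem_cl.1 he
  refine mem_cl.2 ⟨heE, le_antisymm ?_ (M.rk_mono _ _ (subset_insert _ _) (insert_subset heE hA))⟩
  calc M.rk (insert e A)
      ≤ M.rk (insert e (M.cl A)) := M.rk_mono _ _ (insert_subset_insert _ (subset_cl hA))
        (insert_subset heE cl_subset_ground)
    _ = M.rk A := by rw [h, rk_cl hA]

lemma cl_subset_of_subset_flat (hAF : A ⊆ X) (hX : X ⊆ M.E) (hflat : M.cl X = X) :
    M.cl A ⊆ X := fun e he => by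
  obtain ⟨heE, h⟩ := mem_cl.1 he
  exact hflat ▸ mem_cl.2 ⟨heE, rk_insert_eq_of_subset hX heE hAF h⟩

lemma rk_insert_of_notMem_cl (hA : A ⊆ M.E) (he : e ∈ M.E) (hcl : e ∉ M.cl A) :
    M.rk (insert e A) = M.rk A + 1 := by
  have := rk_insert_le hA he
  have := M.rk_mono _ _ (subset_insert e A) (insert_subset he hA)
  have : M.rk (insert e A) ≠ M.rk A := fun h => hcl (mem_cl.2 ⟨he, h⟩)
  omega

lemma mem_cyc : e ∈ M.cyc A ↔ e ∈ A ∧ M.rk (A.erase e) = M.rk A := mem_filter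

lemma cyc_subset : M.cyc A ⊆ A := filter_subset _ _

lemma rk_erase_add_one (hA : A ⊆ M.E) (he : e ∈ A) (hcyc : e ∉ M.cyc A) :
    M.rk (A.erase e) + 1 = M.rk A := by
  have := M.rk_mono _ _ (erase_subset e A) hA
  have := rk_insert_le ((erase_subset e A).trans hA) (hA he)
  have : M.rk (A.erase e) ≠ M.rk A := fun h => hcyc (mem_cyc.2 ⟨he, h⟩)
  rw [insert_erase he] at *
  omega

lemma cyc_subset_cyc (hA : A ⊆ M.E) (hBA : B ⊆ A) : M.cyc B ⊆ M.cyc A := fun e he => by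
  obtain ⟨heB, h⟩ := mem_cyc.1 he
  have h' : M.rk (insert e (B.erase e)) = M.rk (B.erase e) := by rw [insert_erase heB, h]
  have := rk_insert_eq_of_subset ((erase_subset e A).trans hA) (hA (hBA heB))
    (erase_subset_erase e hBA) h'
  exact mem_cyc.2 ⟨hBA heB, by rw [← this, insert_erase (hBA heB)]⟩

/-- Every element of `A` outside its cyclic part is a coloop, so removing them drops the rank
by one each. -/
lemma rk_add_card_sdiff_of_cyc_subset (hA : A ⊆ M.E) (hBA : B ⊆ A) (hcyc : M.cyc A ⊆ B) :
    M.rk B + (A \ B).card = M.rk A := by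
  suffices ∀ C, Disjoint B C → B ∪ C ⊆ M.E → M.cyc (B ∪ C) ⊆ B →
      M.rk B + C.card = M.rk (B ∪ C) by
    simpa [union_sdiff_of_subset hBA] using
      this (A \ B) disjoint_sdiff (by rwa [union_sdiff_of_subset hBA])
        (by rwa [union_sdiff_of_subset hBA])
  intro C
  induction C using Finset.induction with
  | empty => simp
  | insert c C hc ih =>
    intro hdisj hE hcyc
    have hcB : c ∉ B := disjoint_right.1 hdisj (mem_insert_self c C)
    have herase : (B ∪ insert c C).erase c = B ∪ C := by
      ext x; simp only [mem_erase, mem_union, mem_insert]; grind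
    have hsub : B ∪ C ⊆ B ∪ insert c C := union_subset_union_right (subset_insert c C)
    have := rk_erase_add_one hE (by simp) (fun h => hcB (hcyc h))
    rw [herase] at this
    rw [card_insert_of_notMem hc, ← this,
      ← ih (disjoint_of_subset_right (subset_insert c C) hdisj) (hsub.trans hE)
        ((cyc_subset_cyc hE hsub).trans hcyc)]
    omega

lemma cyc_cyc (hA : A ⊆ M.E) : M.cyc (M.cyc A) = M.cyc A := by
  refine Subset.antisymm cyc_subset (fun u hu => mem_cyc.2 ⟨hu, ?_⟩)
  obtain ⟨huA, hrk⟩ := mem_cyc.1 hu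
  have hAu : A.erase u ⊆ M.E := (erase_subset u A).trans hA
  have h1 := rk_add_card_sdiff_of_cyc_subset hA cyc_subset subset_rfl
  have h2 := rk_add_card_sdiff_of_cyc_subset hAu (erase_subset_erase u cyc_subset)
    (subset_erase.2 ⟨cyc_subset_cyc hA (erase_subset u A),
      fun h => (mem_erase.1 (cyc_subset h)).1 rfl⟩)
  have hsd : A.erase u \ (M.cyc A).erase u = A \ M.cyc A := by
    ext x; simp only [mem_sdiff, mem_erase]; grind
  rw [hsd, hrk] at h2
  omega

lemma isCyclicFlat_cyc (hX : X ⊆ M.E) (hflat : M.cl X = X) : M.IsCyclicFlat (M.cyc X) := by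
  refine ⟨cyc_subset.trans hX, Subset.antisymm (fun e he => ?_) (subset_cl (cyc_subset.trans hX)),
    cyc_cyc hX⟩
  obtain ⟨heE, h⟩ := mem_cl.1 he
  have heX : e ∈ X := cl_subset_of_subset_flat cyc_subset hX hflat he
  by_contra hcyc
  have := rk_insert_eq_of_subset ((erase_subset e X).trans hX) heE
    (subset_erase.2 ⟨cyc_subset, hcyc⟩) h
  rw [insert_erase heX] at this
  have := rk_erase_add_one hX heX hcyc
  omega

lemma rk_union_eq_add_card (hZ : Z ⊆ M.E) (hB : B ⊆ M.E \ Z)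
    (hcyc : M.cyc (M.cl (Z ∪ B)) ⊆ Z) : M.rk (Z ∪ B) = M.rk Z + B.card := by
  have hZB : Z ∪ B ⊆ M.E := union_subset hZ (hB.trans sdiff_subset)
  have hcl := subset_cl hZB
  have key := rk_add_card_sdiff_of_cyc_subset cl_subset_ground (subset_union_left.trans hcl) hcyc
  have hBcl : B ⊆ M.cl (Z ∪ B) \ Z :=
    fun b hb => mem_sdiff.2 ⟨hcl (mem_union_right Z hb), (mem_sdiff.1 (hB hb)).2⟩
  have := card_le_card hBcl
  have := rk_union_le hZ (hB.trans sdiff_subset)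
  rw [rk_cl hZB] at key
  omega

lemma IsAtomCF.rk_eq_card (ha : M.IsAtomCF Z) (hBZ : B ⊆ Z) (hcard : B.card ≤ M.rk Z) :
    M.rk B = B.card := by
  obtain ⟨⟨hZE, hZcl, -⟩, -, hmin⟩ := ha
  have hBE := hBZ.trans hZE
  by_cases hlt : M.rk B < M.rk Z
  · have hcyc : M.cyc (M.cl B) = ∅ := by
      by_contra hne
      have hsub : M.cyc (M.cl B) ⊆ Z := cyc_subset.trans (cl_subset_of_subset_flat hBZ hZE hZcl)
      have hrk : M.rk (M.cyc (M.cl B)) ≤ M.rk B :=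
        rk_cl hBE ▸ M.rk_mono _ _ cyc_subset cl_subset_ground
      exact hmin ⟨_, isCyclicFlat_cyc cl_subset_ground (cl_cl hBE),
        empty_ssubset.2 (nonempty_iff_ne_empty.2 hne),
        ssubset_of_subset_of_ne hsub (by rintro h; rw [h] at hrk; omega)⟩
    simpa [rk_empty] using rk_union_eq_add_card (Z := ∅) (empty_subset _) (by simpa using hBE)
      (by simp [hcyc])
  · have := M.rk_le_card B hBE
    have := M.rk_mono B Z hBZ hZE
    omega

lemma IsCoatomCF.rk_union_eq_add_card (hc : M.IsCoatomCF Z) (hB : B ⊆ M.E \ Z)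
    (hcard : M.rk Z + B.card ≤ M.rk M.E) : M.rk (Z ∪ B) = M.rk Z + B.card := by
  obtain ⟨⟨hZE, -, hZcyc⟩, -, hmax⟩ := hc
  have hZB : Z ∪ B ⊆ M.E := union_subset hZE (hB.trans sdiff_subset)
  by_cases hlt : M.rk (Z ∪ B) < M.rk M.E
  · refine FinMatroid.rk_union_eq_add_card hZE hB (not_not.1 fun hne => hmax ?_)
    have hZcyc' : Z ⊆ M.cyc (M.cl (Z ∪ B)) := by
      simpa only [hZcyc] using
        cyc_subset_cyc cl_subset_ground (subset_union_left.trans (subset_cl hZB))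
    have hrk : M.rk (M.cyc (M.cl (Z ∪ B))) < M.rk M.E :=
      lt_of_le_of_lt (rk_cl hZB ▸ M.rk_mono _ _ cyc_subset cl_subset_ground) hlt
    exact ⟨_, isCyclicFlat_cyc cl_subset_ground (cl_cl hZB),
      ssubset_of_subset_not_subset hZcyc' hne,
      ssubset_of_subset_of_ne (cyc_subset.trans cl_subset_ground)
        (by rintro h; rw [h] at hrk; omega)⟩
  · have := rk_union_le hZE (hB.trans sdiff_subset)
    have := M.rk_mono _ _ hZB subset_rfl
    omega

lemma IsMinDist.rk_sdiff_eq {d : ℕ} (hd : M.IsMinDist d) (hX : X ⊆ M.E) (hcard : X.card < d) :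
    M.rk (M.E \ X) = M.rk M.E := by
  have := M.rk_mono (M.E \ X) M.E sdiff_subset subset_rfl
  by_contra h
  have := hd.2 X hX (lt_of_le_of_ne this h)
  omega

lemma rk_lt_card_of_cyc_eq (hA : A ⊆ M.E) (hcyc : M.cyc A = A) (hne : A.Nonempty) :
    M.rk A < A.card := by
  obtain ⟨x, hx⟩ := hne
  have := M.rk_le_card _ ((erase_subset x A).trans hA)
  rw [(mem_cyc.1 (hcyc.symm ▸ hx)).2, card_erase_of_mem hx] at this
  have := card_pos.2 ⟨x, hx⟩
  omega

lemma IsAtomCF.two_le_rk (hs : M.Simple) (ha : M.IsAtomCF Z) : 2 ≤ M.rk Z := by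
  obtain ⟨⟨hZE, -, hZcyc⟩, hne, -⟩ := ha
  obtain ⟨x, hx⟩ := nonempty_iff_ne_empty.2 hne
  have hx1 := hs.1 x (hZE hx)
  have hxZ := M.rk_mono {x} Z (singleton_subset_iff.2 hx) hZE
  obtain ⟨y, hy⟩ : (Z.erase x).Nonempty := by
    rw [nonempty_iff_ne_empty]
    intro h
    have := (mem_cyc.1 (hZcyc.symm ▸ hx)).2
    rw [h, rk_empty] at this
    omega
  have := hs.2 x (hZE hx) y (hZE (mem_of_mem_erase hy)) (ne_of_mem_erase hy).symm
  have := M.rk_mono {x, y} Z (insert_subset hx (singleton_subset_iff.2 (mem_of_mem_erase hy))) hZE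
  omega

section Representation

variable {K V : Type*} [Field K] [AddCommGroup V] [Module K V] {φ : α → V} {T : Finset α}

variable (K) in
def IsRep (M : FinMatroid α) (φ : α → V) : Prop :=
  ∀ A ⊆ M.E, M.rk A = Module.finrank K (repSpan K φ A)

lemma IsRep.repSpan_eq_of_rk_le (hφ : IsRep K M φ) (hAB : A ⊆ B) (hB : B ⊆ M.E)
    (hrk : M.rk B ≤ M.rk A) : repSpan K φ A = repSpan K φ B := by
  refine Submodule.eq_of_le_of_finrank_le (Submodule.span_mono (Set.image_mono hAB)) ?_
  rwa [← hφ A (hAB.trans hB), ← hφ B hB]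

lemma IsRep.mem_repSpan_iff_mem_cl (hφ : IsRep K M φ) (hA : A ⊆ M.E) (he : e ∈ M.E) :
    φ e ∈ repSpan K φ A ↔ e ∈ M.cl A := by
  have hiA : insert e A ⊆ M.E := insert_subset he hA
  refine ⟨fun h => mem_cl.2 ⟨he, ?_⟩, fun h => ?_⟩
  · rw [hφ _ hiA, hφ _ hA, repSpan, coe_insert, Set.image_insert_eq,
      Submodule.span_insert_eq_span h, repSpan]
  · rw [hφ.repSpan_eq_of_rk_le (subset_insert e A) hiA (mem_cl.1 h).2.le]
    exact mem_repSpan (mem_insert_self e A)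

lemma IsRep.sum_notMem_repSpan (hφ : IsRep K M φ) (hX : X ⊆ M.E) (hT : T ⊆ M.E)
    (hne : T.Nonempty) (hrk : M.rk (X ∪ T) = M.rk X + T.card) :
    ∑ e ∈ T, φ e ∉ repSpan K φ X := by
  intro hsum
  obtain ⟨t, ht⟩ := hne
  have hXT : X ∪ T.erase t ⊆ M.E := union_subset hX ((erase_subset t T).trans hT)
  have hmem : φ t ∈ repSpan K φ (X ∪ T.erase t) := by
    rw [← add_sub_cancel_right (φ t) (∑ e ∈ T.erase t, φ e), add_sum_erase T φ ht]
    refine sub_mem (Submodule.span_mono (Set.image_mono subset_union_left) hsum)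
      (Submodule.sum_mem _ fun e he => mem_repSpan (mem_union_right X he))
  have hcl := (mem_cl.1 ((hφ.mem_repSpan_iff_mem_cl hXT (hT ht)).1 hmem)).2
  rw [← union_insert, insert_erase ht, hrk] at hcl
  have := rk_union_le hX ((erase_subset t T).trans hT)
  rw [card_erase_of_mem ht] at this
  have := card_pos.2 ⟨t, ht⟩
  omega

end Representation

section Binary

variable {V : Type*} [AddCommGroup V] [Module (ZMod 2) V] {φ : α → V} {D : Finset α}

lemma mem_repSpan_insert_iff {v : V} :
    v ∈ repSpan (ZMod 2) φ (insert e A) ↔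
      v ∈ repSpan (ZMod 2) φ A ∨ v + φ e ∈ repSpan (ZMod 2) φ A := by
  rw [repSpan, coe_insert, Set.image_insert_eq, Submodule.mem_span_insert]
  constructor
  · rintro ⟨c, z, hz, rfl⟩
    obtain rfl | rfl : c = 0 ∨ c = 1 := by revert c; decide
    · rw [zero_smul, zero_add]
      exact Or.inl hz
    · rw [one_smul, add_comm, add_assoc, ZModModule.add_self, add_zero]
      exact Or.inr hz
  · rintro (h | h)
    · exact ⟨0, v, h, by simp⟩
    · exact ⟨1, v + φ e, h, by rw [one_smul, add_left_comm, ZModModule.add_self, add_zero]⟩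

lemma add_add_mem_repSpan {v : V} {a b : α}
    (hv : v ∈ repSpan (ZMod 2) φ (insert a (insert b X))) (h : v ∉ repSpan (ZMod 2) φ X)
    (ha : v + φ a ∉ repSpan (ZMod 2) φ X) (hb : v + φ b ∉ repSpan (ZMod 2) φ X) :
    v + φ a + φ b ∈ repSpan (ZMod 2) φ X := by
  rcases mem_repSpan_insert_iff.1 hv with h' | h' <;>
    rcases mem_repSpan_insert_iff.1 h' with h'' | h''
  exacts [absurd h'' h, absurd h'' hb, absurd h'' ha, h'']

lemma exists_subset_sum_eq_of_mem_repSpan {v : V} (hv : v ∈ repSpan (ZMod 2) φ A) :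
    ∃ T ⊆ A, ∑ e ∈ T, φ e = v := by
  induction A using Finset.induction generalizing v with
  | empty =>
    refine ⟨∅, subset_rfl, ?_⟩
    simpa [repSpan, eq_comm] using hv
  | insert a A ha ih =>
    rcases mem_repSpan_insert_iff.1 hv with h | h
    · obtain ⟨T, hT, hsum⟩ := ih h
      exact ⟨T, hT.trans (subset_insert a A), hsum⟩
    · obtain ⟨T, hT, hsum⟩ := ih h
      refine ⟨insert a T, insert_subset_insert a hT, ?_⟩
      rw [sum_insert (fun haT => ha (hT haT)), hsum, add_left_comm, ZModModule.add_self, add_zero]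

/-- Over `GF(2)` the only nontrivial linear dependency among the vectors of a circuit has all
coefficients equal to one. -/
lemma IsCircuit.sum_eq_zero (hφ : IsRep (ZMod 2) M φ) (hC : M.IsCircuit C) :
    ∑ e ∈ C, φ e = 0 := by
  obtain ⟨hCE, hlt, hindep⟩ := hC
  obtain ⟨e, he⟩ : C.Nonempty := card_pos.1 (by omega)
  have hCe : C.erase e ⊆ M.E := (erase_subset e C).trans hCE
  have hmem : φ e ∈ repSpan (ZMod 2) φ (C.erase e) := by
    refine (hφ.mem_repSpan_iff_mem_cl hCe (hCE he)).2 (mem_cl.2 ⟨hCE he, ?_⟩)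
    have := hindep _ (erase_ssubset he)
    have := M.rk_mono _ _ (erase_subset e C) hCE
    rw [card_erase_of_mem he] at *
    rw [insert_erase he]
    omega
  obtain ⟨T, hT, hsum⟩ := exists_subset_sum_eq_of_mem_repSpan hmem
  have heT : e ∉ T := fun h => (mem_erase.1 (hT h)).1 rfl
  have hTE : T ⊆ M.E := hT.trans hCe
  have hTC : insert e T = C := by
    by_contra hne
    have h1 :=
      hindep _ (ssubset_of_subset_of_ne (insert_subset he (hT.trans (erase_subset e C))) hne)
    have h2 := (mem_cl.1 ((hφ.mem_repSpan_iff_mem_cl hTE (hCE he)).1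
      (hsum ▸ Submodule.sum_mem _ fun x hx => mem_repSpan hx))).2
    have := M.rk_le_card T hTE
    rw [card_insert_of_notMem heT] at h1
    omega
  rw [← hTC, sum_insert heT, hsum, ZModModule.add_self]

/-- A binary simple rank-2 matroid has at most three points: `GF(2)²` has only three nonzero
vectors. Here it is the restriction to `D` of the contraction by `X`. -/
lemma IsRep.card_le_three (hφ : IsRep (ZMod 2) M φ) (hX : X ⊆ M.E) (hD : D ⊆ M.E)
    (hindep : ∀ B ⊆ D, B.card ≤ 2 → M.rk (X ∪ B) = M.rk X + B.card)
    (htop : M.rk (X ∪ D) ≤ M.rk X + 2) : D.card ≤ 3 := by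
  by_contra! h4
  have hnotMem : ∀ B ⊆ D, B.Nonempty → B.card ≤ 2 → ∑ e ∈ B, φ e ∉ repSpan (ZMod 2) φ X :=
    fun B hB hne hcard => hφ.sum_notMem_repSpan hX (hB.trans hD) hne (hindep B hB hcard)
  have hpair : ∀ e ∈ D, ∀ f ∈ D, e ≠ f → φ e + φ f ∉ repSpan (ZMod 2) φ X := fun e he f hf hef => by
    simpa [sum_pair hef] using
      hnotMem {e, f} (insert_subset he (singleton_subset_iff.2 hf)) (insert_nonempty _ _)
        (card_le_two)
  obtain ⟨e₁, he₁, e₂, he₂, h₁₂⟩ := one_lt_card.1 (by omega : 1 < D.card)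
  have hsum : ∀ e ∈ D, e ≠ e₁ → e ≠ e₂ → φ e + φ e₁ + φ e₂ ∈ repSpan (ZMod 2) φ X := by
    intro e he hne₁ hne₂
    have h₁₂X : insert e₁ (insert e₂ X) ⊆ M.E := insert_subset (hD he₁) (insert_subset (hD he₂) hX)
    have hrk : M.rk (insert e₁ (insert e₂ X)) = M.rk X + 2 := by
      have := hindep {e₁, e₂} (insert_subset he₁ (singleton_subset_iff.2 he₂)) card_le_two
      rwa [card_pair h₁₂, union_insert, union_singleton] at this
    have hmem : φ e ∈ repSpan (ZMod 2) φ (insert e₁ (insert e₂ X)) := by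
      refine (hφ.mem_repSpan_iff_mem_cl h₁₂X (hD he)).2 (mem_cl.2 ⟨hD he, le_antisymm ?_ ?_⟩)
      · refine (M.rk_mono _ (X ∪ D) ?_ (union_subset hX hD)).trans (hrk ▸ htop)
        simp only [insert_subset_iff]
        exact ⟨mem_union_right X he, mem_union_right X he₁, mem_union_right X he₂,
          subset_union_left⟩
      · exact M.rk_mono _ _ (subset_insert e _) (insert_subset (hD he) h₁₂X)
    have hsingle := hnotMem {e} (singleton_subset_iff.2 he) (singleton_nonempty e) (by simp)
    rw [sum_singleton] at hsingle
    exact add_add_mem_repSpan hmem hsingle (hpair e he e₁ he₁ hne₁) (hpair e he e₂ he₂ hne₂)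
  have hrest : 1 < ((D.erase e₁).erase e₂).card := by
    rw [card_erase_of_mem (mem_erase.2 ⟨h₁₂.symm, he₂⟩), card_erase_of_mem he₁]
    omega
  obtain ⟨e₃, he₃, e₄, he₄, h₃₄⟩ := one_lt_card.1 hrest
  simp only [mem_erase] at he₃ he₄
  have := add_mem (hsum e₃ he₃.2.2 he₃.2.1 he₃.1) (hsum e₄ he₄.2.2 he₄.2.1 he₄.1)
  rw [show φ e₃ + φ e₁ + φ e₂ + (φ e₄ + φ e₁ + φ e₂) = φ e₃ + φ e₄ + (φ e₁ + φ e₁) + (φ e₂ + φ e₂)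
    by abel, ZModModule.add_self, ZModModule.add_self, add_zero, add_zero] at this
  exact hpair e₃ he₃.2.2 e₄ he₄.2.2 h₃₄ this

/-- A binary uniform matroid `U_{r,n}` with `r ≥ 2` has `n ≤ r + 1`; here it is the restriction to
`D` of the contraction by `Z`. Contracting `r - 2` of its points leaves `U_{2,n-r+2}`. -/
lemma IsRep.card_le_add_one (hφ : IsRep (ZMod 2) M φ) (hZ : Z ⊆ M.E) (hD : D ⊆ M.E) {r : ℕ}
    (hr : 2 ≤ r) (hindep : ∀ B ⊆ D, B.card ≤ r → M.rk (Z ∪ B) = M.rk Z + B.card)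
    (htop : M.rk (Z ∪ D) ≤ M.rk Z + r) : D.card ≤ r + 1 := by
  by_contra! h
  obtain ⟨S, hSD, hS⟩ := exists_subset_card_eq (by omega : r - 2 ≤ D.card)
  have hZS := hindep S hSD (by omega)
  have := hφ.card_le_three (X := Z ∪ S) (D := D \ S) (union_subset hZ (hSD.trans hD))
    (sdiff_subset.trans hD) (fun B hB hcard => ?_)
    (by rw [union_assoc, union_sdiff_of_subset hSD]; omega)
  · rw [card_sdiff_of_subset hSD] at this
    omega
  · have hdisj : Disjoint S B := disjoint_of_subset_right hB disjoint_sdiff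
    have := hindep (S ∪ B) (union_subset hSD (hB.trans sdiff_subset))
      (by rw [card_union_of_disjoint hdisj]; omega)
    rw [← union_assoc, card_union_of_disjoint hdisj] at this
    omega

lemma IsAtomCF.isCircuit (hφ : IsRep (ZMod 2) M φ) (hs : M.Simple) (ha : M.IsAtomCF Z) :
    M.IsCircuit Z := by
  have hZE := ha.1.1
  have hlt := rk_lt_card_of_cyc_eq hZE ha.1.2.2 (nonempty_iff_ne_empty.2 ha.2.1)
  have hcard : Z.card ≤ M.rk Z + 1 :=
    hφ.card_le_add_one (Z := ∅) (empty_subset _) hZE (ha.two_le_rk hs)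
      (fun B hB hcard => by simpa [rk_empty] using ha.rk_eq_card hB hcard) (by simp [rk_empty])
  refine ⟨hZE, hlt, fun B hB => ha.rk_eq_card hB.subset ?_⟩
  have := card_lt_card hB
  omega

/-- Distance `d ≥ 3` forbids 2-element cocircuits, so the contraction by a coatom, a binary
uniform matroid, must have rank one. -/
lemma IsCoatomCF.rk_insert_eq (hφ : IsRep (ZMod 2) M φ) {d : ℕ} (hd : M.IsMinDist d)
    (h3 : 3 ≤ d) (hc : M.IsCoatomCF Z) (he : e ∈ M.E \ Z) : M.rk (insert e Z) = M.rk M.E := by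
  have hZE := hc.1.1
  have hZD : Z ∪ (M.E \ Z) = M.E := union_sdiff_of_subset hZE
  have hlt := M.rk_mono _ _ (insert_subset (mem_sdiff.1 he).1 hZE) subset_rfl
  by_contra hne
  have h1 := rk_insert_of_notMem_cl hZE (mem_sdiff.1 he).1 (hc.1.2.1.symm ▸ (mem_sdiff.1 he).2)
  have hn := rk_union_le hZE (sdiff_subset : M.E \ Z ⊆ M.E)
  rw [hZD] at hn
  obtain ⟨X, hXD, hX⟩ := exists_subset_card_eq (by omega : 2 ≤ (M.E \ Z).card)
  have hcut : M.rk M.E ≤ M.rk Z + ((M.E \ Z).card - 2) := by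
    have hEX : M.E \ X = Z ∪ ((M.E \ Z) \ X) := by
      ext x
      have := @hXD x
      simp only [mem_union, mem_sdiff] at this ⊢
      tauto
    rw [← hd.rk_sdiff_eq (hXD.trans sdiff_subset) (by omega), hEX, ← hX, ← card_sdiff_of_subset hXD]
    exact rk_union_le hZE (sdiff_subset.trans sdiff_subset)
  have := hφ.card_le_add_one hZE sdiff_subset (r := M.rk M.E - M.rk Z) (by omega)
    (fun B hB hcard => hc.rk_union_eq_add_card hB (by omega)) (by rw [hZD]; omega)
  omega

/-- All elements outside a coatom `Z` are parallel in the contraction by `Z`. -/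
lemma IsCoatomCF.exists_forall_mkQ_eq (hφ : IsRep (ZMod 2) M φ) {d : ℕ} (hd : M.IsMinDist d)
    (h3 : 3 ≤ d) (hc : M.IsCoatomCF Z) :
    ∃ v ≠ 0, ∀ e ∈ M.E \ Z, (repSpan (ZMod 2) φ Z).mkQ (φ e) = v := by
  obtain ⟨⟨hZE, hZcl, -⟩, hZ, -⟩ := id hc
  have hnotMem : ∀ e ∈ M.E \ Z, φ e ∉ repSpan (ZMod 2) φ Z := fun e he h =>
    (mem_sdiff.1 he).2 (hZcl ▸ (hφ.mem_repSpan_iff_mem_cl hZE (mem_sdiff.1 he).1).1 h)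
  obtain ⟨e₀, he₀⟩ := exists_of_ssubset hZ
  have he₀' : e₀ ∈ M.E \ Z := mem_sdiff.2 he₀
  refine ⟨(repSpan (ZMod 2) φ Z).mkQ (φ e₀), by simpa using hnotMem e₀ he₀', fun e he => ?_⟩
  have hrk := hc.rk_insert_eq hφ hd h3 he₀'
  have he₀Z : insert e₀ Z ⊆ M.E := insert_subset he₀.1 hZE
  have hmem : φ e ∈ repSpan (ZMod 2) φ (insert e₀ Z) := by
    refine (hφ.mem_repSpan_iff_mem_cl he₀Z (mem_sdiff.1 he).1).2 (mem_cl.2 ⟨(mem_sdiff.1 he).1, ?_⟩)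
    have := M.rk_mono _ _ (insert_subset (mem_sdiff.1 he).1 he₀Z) subset_rfl
    have := M.rk_mono _ _ (subset_insert e _) (insert_subset (mem_sdiff.1 he).1 he₀Z)
    omega
  rcases mem_repSpan_insert_iff.1 hmem with h | h
  · exact absurd h (hnotMem e he)
  · rwa [Submodule.mkQ_apply, Submodule.mkQ_apply, Submodule.Quotient.eq, ZModModule.sub_eq_add]

end Binary

end FinMatroid

theorem atom_sdiff_coatom_even_general {α : Type*} [DecidableEq α] (M : FinMatroid α)
    (hs : M.Simple) (hb : M.IsBinary)
    (d : ℕ) (hd : M.IsMinDist d) (h3 : 3 ≤ d)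
    (Za : Finset α) (ha : M.IsAtomCF Za)
    (Zc : Finset α) (hc : M.IsCoatomCF Zc) :
    Even ((Za \ Zc).card) := by
  obtain ⟨_, φ, hφ⟩ := hb
  obtain ⟨v, hv, hφv⟩ := hc.exists_forall_mkQ_eq hφ hd h3
  set π := (FinMatroid.repSpan (ZMod 2) φ Zc).mkQ
  refine ZModModule.even_of_nsmul_eq_zero hv ?_
  calc (Za \ Zc).card • v
      = ∑ e ∈ Za \ Zc, π (φ e) := by
        rw [sum_congr rfl fun e he => hφv e (sdiff_subset_sdiff ha.1.1 subset_rfl he), sum_const]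
    _ = ∑ e ∈ Za, π (φ e) := sum_subset sdiff_subset fun e he he' =>
        (Submodule.Quotient.mk_eq_zero _).2 (FinMatroid.mem_repSpan (by simpa [he] using he'))
    _ = 0 := by rw [← map_sum, (ha.isCircuit hφ hs).sum_eq_zero hφ, map_zero]

/-- In a simple binary matroid with no isthmuses and minimum distance
`d ≥ 3`, for every atom `Za` and coatom `Zc` of the lattice of cyclic flats,
`|Za − Zc|` is even. -/
theorem atom_sdiff_coatom_even {α : Type*} [DecidableEq α] (M : FinMatroid α)
    (hs : M.Simple) (hni : M.NoIsthmus) (hb : M.IsBinary)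
    (d : ℕ) (hd : M.IsMinDist d) (h3 : 3 ≤ d)
    (Za : Finset α) (ha : M.IsAtomCF Za)
    (Zc : Finset α) (hc : M.IsCoatomCF Zc) :
    Even ((Za \ Zc).card) :=
  atom_sdiff_coatom_even_general M hs hb d hd h3 Za ha Zc hc
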